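/- Assume Δ = E[Y^{(1)} − Y^{(0)}] > 0. If (i) ∫ ψ_1 d(F_{X,S^{(1)}} − F_{X,S}) ≥ ∫ ψ_0 d(F_{X,S^{(0)}} − F_{X,S}) and (ii) ∫ (ψ_1 − ψ_0) dF_{X,S} ≥ 0, then the proportion of treatment effect explained R_S = 1 − Δ_S/Δ satisfies 0 ≤ R_S ≤ 1, where Δ_S = ∫ (ψ_1 − ψ_0) dF_{X,S} and Δ = ∫ ψ_1 dF_{X,S^{(1)}} − ∫ ψ_0 dF_{X,S^{(0)}}. -/
import Mathlib

open MeasureTheory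

/-- if `Δ = ∫ψ₁ dF₁ − ∫ψ₀ dF₀ > 0`,
(i) `∫ψ₁ d(F₁ − F) ≥ ∫ψ₀ d(F₀ − F)` and (ii) `∫(ψ₁ − ψ₀) dF ≥ 0`,
then the proportion of treatment effect explained `R_S = 1 − Δ_S/Δ` with
`Δ_S = ∫(ψ₁ − ψ₀) dF` satisfies `0 ≤ R_S ≤ 1`. -/
theorem pte_is_a_proportion
    {𝓧 𝓢 : Type*} [MeasurableSpace 𝓧] [MeasurableSpace 𝓢]
    (F₀ F₁ F : Measure (𝓧 × 𝓢))
    [IsProbabilityMeasure F₀] [IsProbabilityMeasure F₁] [IsProbabilityMeasure F]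
    (ψ₀ ψ₁ : 𝓧 × 𝓢 → ℝ)
    (hψ₀F₀ : Integrable ψ₀ F₀) (hψ₁F₁ : Integrable ψ₁ F₁)
    (hψ₀F : Integrable ψ₀ F) (hψ₁F : Integrable ψ₁ F)
    (Δ ΔS : ℝ)
    (hΔ : Δ = ∫ q, ψ₁ q ∂F₁ - ∫ q, ψ₀ q ∂F₀)
    (hΔS : ΔS = ∫ q, (ψ₁ q - ψ₀ q) ∂F)
    (hΔpos : 0 < Δ)
    -- condition (i)
    (h1 : ∫ q, ψ₁ q ∂F₁ - ∫ q, ψ₁ q ∂F ≥ ∫ q, ψ₀ q ∂F₀ - ∫ q, ψ₀ q ∂F)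
    -- condition (ii)
    (h2 : ∫ q, (ψ₁ q - ψ₀ q) ∂F ≥ 0) :
    0 ≤ 1 - ΔS / Δ ∧ 1 - ΔS / Δ ≤ 1 := by
  have hsub : ΔS = ∫ q, ψ₁ q ∂F - ∫ q, ψ₀ q ∂F := by
    rw [hΔS, integral_sub hψ₁F hψ₀F]
  have hle : ΔS ≤ Δ := by rw [hsub, hΔ]; linarith
  have h0 : 0 ≤ ΔS := hΔS ▸ h2
  constructor
  · have : ΔS / Δ ≤ 1 := (div_le_one hΔpos).mpr hle
    linarith
  · have : 0 ≤ ΔS / Δ := div_nonneg h0 hΔpos.le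
    linarith
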